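/- Suppose there exist simple 6-(23,7,5), 6-(23,8,136), 6-(23,9,200), 6-(23,10,700), 6-(23,11,1820), 6-(23,12,3640), 6-(23,13,5720), 6-(23,14,7150) and 6-(23,15,7150) designs. Then there exists a simple 6-(46, 15, 80423200) design (note 80423200 = 28120 × 2860). -/

import Mathlib

/-!
Put two 23-sets `Y₁`, `Y₂` side by side. For `i ≤ 15` let `F i` be the family of all `i`-subsets
of a 23-set when `i ≤ 6`, and the given `6-(23, i, λᵢ)` design when `i ≥ 7`; take as blocks the
sets `b₁ ∪ b₂` with `b₁ ∈ F i` on `Y₁` and `b₂ ∈ F (15 - i)` on `Y₂`. In every `F i` the number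
`cᵢ(m)` of blocks through an `m`-set, `m ≤ 6`, depends only on `m` (for a design it is
`λᵢ C(23 - m, 6 - m) / C(i - m, 6 - m)`, by double counting), so a 6-set meeting `Y₁` in `m`
points lies in `∑ᵢ cᵢ(m) c₁₅₋ᵢ(6 - m)` blocks, and this sum is `80423200` for every `m ≤ 6`.
-/

/-- `SimpleDesignExists t v k lam` asserts the existence of a simple
`t-(v, k, lam)` design: a `v`-set `X` together with a set `B` of distinct
`k`-element subsets of `X` (blocks) such that every `t`-element subset of `X`
is contained in exactly `lam` blocks. -/
def SimpleDesignExists (t v k lam : ℕ) : Prop :=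
  ∃ (X : Finset ℕ) (B : Finset (Finset ℕ)),
    X.card = v ∧
    (∀ b ∈ B, b ⊆ X ∧ b.card = k) ∧
    (∀ T ⊆ X, T.card = t → (B.filter (fun b => T ⊆ b)).card = lam)

open Finset

section Designs

variable {α β : Type*} [DecidableEq α] [DecidableEq β]

def IsDesign (X : Finset α) (B : Finset (Finset α)) (t k lam : ℕ) : Prop :=
  (∀ b ∈ B, b ⊆ X ∧ #b = k) ∧ ∀ T ⊆ X, #T = t → #{b ∈ B | T ⊆ b} = lam

def HasSupersetCounts (X : Finset α) (B : Finset (Finset α)) (t : ℕ) (c : ℕ → ℕ) : Prop :=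
  ∀ M ⊆ X, #M ≤ t → #{b ∈ B | M ⊆ b} = c #M

theorem IsDesign.map {X : Finset α} {B : Finset (Finset α)} {t k lam : ℕ}
    (h : IsDesign X B t k lam) (e : α ≃ β) :
    IsDesign (X.map e.toEmbedding) (B.map (mapEmbedding e.toEmbedding).toEmbedding) t k lam := by
  refine ⟨fun b' hb' => ?_, fun T hT hTt => ?_⟩
  · obtain ⟨b, hb, rfl⟩ := mem_map.1 hb'
    exact ⟨map_subset_map.2 (h.1 b hb).1, (card_map _).trans (h.1 b hb).2⟩
  · obtain ⟨S, rfl⟩ : ∃ S, T = S.map e.toEmbedding :=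
      ⟨T.map e.symm.toEmbedding, by simp [map_map]⟩
    rw [filter_map, card_map]
    simpa [Function.comp_def, map_subset_map] using
      h.2 S (map_subset_map.1 hT) ((card_map _).symm.trans hTt)

theorem IsDesign.card_filter_superset_mul {X M : Finset α} {B : Finset (Finset α)} {t k lam : ℕ}
    (h : IsDesign X B t k lam) (hM : M ⊆ X) (hMt : #M ≤ t) :
    #{b ∈ B | M ⊆ b} * (k - #M).choose (t - #M) = lam * (#X - #M).choose (t - #M) := by
  have hcount := card_mul_eq_card_mul (fun b T => T ⊆ b)
    (s := {b ∈ B | M ⊆ b}) (t := {T ∈ X.powersetCard t | M ⊆ T})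
    (m := (k - #M).choose (t - #M)) (n := lam) ?_ ?_
  · rw [hcount, card_filter_powersetCard_subset _ _ _ hM hMt, mul_comm]
  · intro b hb
    rw [mem_filter] at hb
    have hbX := (h.1 b hb.1).1
    have habove : bipartiteAbove (fun b T => T ⊆ b) {T ∈ X.powersetCard t | M ⊆ T} b
        = {T ∈ b.powersetCard t | M ⊆ T} := by
      ext T
      simp only [mem_bipartiteAbove, mem_filter, mem_powersetCard]
      exact ⟨fun h => ⟨⟨h.2, h.1.1.2⟩, h.1.2⟩, fun h => ⟨⟨⟨h.1.1.trans hbX, h.1.2⟩, h.2⟩, h.1.1⟩⟩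
    rw [habove, card_filter_powersetCard_subset _ _ _ hb.2 hMt, (h.1 b hb.1).2]
  · intro T hT
    rw [mem_filter, mem_powersetCard] at hT
    have hbelow : bipartiteBelow (fun b T => T ⊆ b) {b ∈ B | M ⊆ b} T = {b ∈ B | T ⊆ b} := by
      ext b
      simp only [mem_bipartiteBelow, mem_filter]
      exact ⟨fun h => ⟨h.1.1, h.2⟩, fun h' => ⟨⟨h'.1, hT.2.trans h'.2⟩, h'.2⟩⟩
    rw [hbelow, h.2 T hT.1.1 hT.1.2]

theorem IsDesign.hasSupersetCounts {X : Finset α} {B : Finset (Finset α)} {t k lam : ℕ}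
    (h : IsDesign X B t k lam) (htk : t ≤ k) :
    HasSupersetCounts X B t fun m => lam * (#X - m).choose (t - m) / (k - m).choose (t - m) :=
  fun M hM hMt => (Nat.div_eq_of_eq_mul_left (Nat.choose_pos (by omega))
    (h.card_filter_superset_mul hM hMt).symm).symm

theorem hasSupersetCounts_powersetCard (X : Finset α) (t k : ℕ) :
    HasSupersetCounts X (X.powersetCard k) t
      fun m => if m ≤ k then (#X - m).choose (k - m) else 0 := by
  intro M hM _
  dsimp only
  split_ifs with hMk
  · exact card_filter_powersetCard_subset _ _ _ hM hMk
  · refine card_eq_zero.2 (filter_eq_empty_iff.2 fun b hb hMb => hMk ?_)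
    exact (mem_powersetCard.1 hb).2 ▸ card_le_card hMb

end Designs

theorem SimpleDesignExists.exists_isDesign {t v k lam : ℕ} (h : SimpleDesignExists t v k lam)
    {Y : Finset ℕ} (hY : #Y = v) : ∃ B, IsDesign Y B t k lam := by
  obtain ⟨X, B, hX, hXB⟩ := h
  obtain ⟨σ, rfl⟩ := Equiv.Perm.exists_map_finset_eq X Y (hX.trans hY.symm)
  exact ⟨_, IsDesign.map hXB σ⟩

section DisjointUnion

variable {α : Type*} [DecidableEq α] {X₁ X₂ : Finset α}

theorem union_inter_eq_left_of_disjoint (hX : Disjoint X₁ X₂) {b₁ b₂ : Finset α}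
    (h₁ : b₁ ⊆ X₁) (h₂ : b₂ ⊆ X₂) : (b₁ ∪ b₂) ∩ X₁ = b₁ := by
  rw [union_inter_distrib_right, inter_eq_left.2 h₁,
    disjoint_iff_inter_eq_empty.1 (disjoint_of_subset_left h₂ hX.symm), union_empty]

theorem union_inter_eq_right_of_disjoint (hX : Disjoint X₁ X₂) {b₁ b₂ : Finset α}
    (h₁ : b₁ ⊆ X₁) (h₂ : b₂ ⊆ X₂) : (b₁ ∪ b₂) ∩ X₂ = b₂ := by
  rw [union_comm, union_inter_eq_left_of_disjoint hX.symm h₂ h₁]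

theorem inter_union_inter_eq_of_subset {T : Finset α} (hT : T ⊆ X₁ ∪ X₂) :
    T ∩ X₁ ∪ T ∩ X₂ = T := by
  rw [← inter_union_distrib_left, inter_eq_left.2 hT]

theorem card_inter_add_card_inter_of_disjoint (hX : Disjoint X₁ X₂) {T : Finset α}
    (hT : T ⊆ X₁ ∪ X₂) : #(T ∩ X₁) + #(T ∩ X₂) = #T := by
  rw [← card_union_of_disjoint (hX.mono inter_subset_right inter_subset_right),
    inter_union_inter_eq_of_subset hT]

theorem subset_union_iff_of_disjoint (hX : Disjoint X₁ X₂) {T b₁ b₂ : Finset α}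
    (hT : T ⊆ X₁ ∪ X₂) (h₁ : b₁ ⊆ X₁) (h₂ : b₂ ⊆ X₂) :
    T ⊆ b₁ ∪ b₂ ↔ T ∩ X₁ ⊆ b₁ ∧ T ∩ X₂ ⊆ b₂ := by
  refine ⟨fun h => ⟨?_, ?_⟩, fun h => ?_⟩
  · simpa only [union_inter_eq_left_of_disjoint hX h₁ h₂] using
      inter_subset_inter_right (u := X₁) h
  · simpa only [union_inter_eq_right_of_disjoint hX h₁ h₂] using
      inter_subset_inter_right (u := X₂) h
  · rw [← inter_union_inter_eq_of_subset hT]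
    exact union_subset_union h.1 h.2

theorem injOn_union_of_disjoint (hX : Disjoint X₁ X₂) {P : Set (Finset α × Finset α)}
    (hP : ∀ p ∈ P, p.1 ⊆ X₁ ∧ p.2 ⊆ X₂) : Set.InjOn (fun p => p.1 ∪ p.2) P := by
  intro p hp q hq hpq
  obtain ⟨hp₁, hp₂⟩ := hP p hp
  obtain ⟨hq₁, hq₂⟩ := hP q hq
  refine Prod.ext ?_ ?_
  · rw [← union_inter_eq_left_of_disjoint hX hp₁ hp₂,
      ← union_inter_eq_left_of_disjoint hX hq₁ hq₂]
    exact congrArg (· ∩ X₁) hpq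
  · rw [← union_inter_eq_right_of_disjoint hX hp₁ hp₂,
      ← union_inter_eq_right_of_disjoint hX hq₁ hq₂]
    exact congrArg (· ∩ X₂) hpq

def sumFamily (F G : ℕ → Finset (Finset α)) (n : ℕ) : Finset (Finset α) :=
  (range (n + 1)).biUnion fun i => (F i ×ˢ G (n - i)).image fun p => p.1 ∪ p.2

variable {F G : ℕ → Finset (Finset α)} {n : ℕ}

theorem subset_and_card_of_mem_sumFamily (hX : Disjoint X₁ X₂)
    (hF : ∀ i ≤ n, ∀ b ∈ F i, b ⊆ X₁ ∧ #b = i) (hG : ∀ i ≤ n, ∀ b ∈ G i, b ⊆ X₂ ∧ #b = i)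
    {b : Finset α} (hb : b ∈ sumFamily F G n) : b ⊆ X₁ ∪ X₂ ∧ #b = n := by
  simp only [sumFamily, mem_biUnion, mem_range, mem_image, mem_product] at hb
  obtain ⟨i, hi, ⟨b₁, b₂⟩, ⟨hb₁, hb₂⟩, rfl⟩ := hb
  obtain ⟨hb₁X, hb₁i⟩ := hF i (by omega) b₁ hb₁
  obtain ⟨hb₂X, hb₂i⟩ := hG (n - i) (by omega) b₂ hb₂
  refine ⟨union_subset_union hb₁X hb₂X, ?_⟩
  rw [card_union_of_disjoint (hX.mono hb₁X hb₂X), hb₁i, hb₂i]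
  omega

theorem card_filter_sumFamily (hX : Disjoint X₁ X₂)
    (hF : ∀ i ≤ n, ∀ b ∈ F i, b ⊆ X₁ ∧ #b = i) (hG : ∀ i ≤ n, ∀ b ∈ G i, b ⊆ X₂ ∧ #b = i)
    {T : Finset α} (hT : T ⊆ X₁ ∪ X₂) :
    #{b ∈ sumFamily F G n | T ⊆ b} =
      ∑ i ∈ range (n + 1), #{b ∈ F i | T ∩ X₁ ⊆ b} * #{b ∈ G (n - i) | T ∩ X₂ ⊆ b} := by
  have hsub : ∀ i ∈ range (n + 1), ∀ p ∈ F i ×ˢ G (n - i),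
      p.1 ⊆ X₁ ∧ p.2 ⊆ X₂ ∧ #p.1 = i := by
    intro i hi p hp
    rw [mem_range] at hi
    rw [mem_product] at hp
    obtain ⟨hp₁, hp₁i⟩ := hF i (by omega) _ hp.1
    exact ⟨hp₁, (hG (n - i) (by omega) _ hp.2).1, hp₁i⟩
  have hdisj : (range (n + 1) : Set ℕ).PairwiseDisjoint
      fun i => (F i ×ˢ G (n - i)).image fun p => p.1 ∪ p.2 := by
    intro i hi j hj hij
    refine disjoint_left.2 fun b hbi hbj => hij ?_
    obtain ⟨p, hp, rfl⟩ := mem_image.1 hbi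
    obtain ⟨q, hq, hpq⟩ := mem_image.1 hbj
    obtain ⟨hp₁, hp₂, rfl⟩ := hsub i hi p hp
    obtain ⟨hq₁, hq₂, rfl⟩ := hsub j hj q hq
    rw [← union_inter_eq_left_of_disjoint hX hp₁ hp₂, ← hpq,
      union_inter_eq_left_of_disjoint hX hq₁ hq₂]
  rw [sumFamily, filter_biUnion, card_biUnion fun i hi j hj hij =>
    disjoint_filter_filter (hdisj hi hj hij)]
  refine sum_congr rfl fun i hi => ?_
  rw [filter_image, card_image_of_injOn, ← card_product, ← filter_product]
  · congr 1
    refine filter_congr fun p hp => ?_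
    obtain ⟨h₁, h₂⟩ := hsub i hi p hp
    exact subset_union_iff_of_disjoint hX hT h₁ h₂.1
  · exact injOn_union_of_disjoint hX fun p hp =>
      (hsub i hi p (mem_filter.1 hp).1).imp_right And.left

theorem isDesign_sumFamily (hX : Disjoint X₁ X₂)
    (hF : ∀ i ≤ n, ∀ b ∈ F i, b ⊆ X₁ ∧ #b = i) (hG : ∀ i ≤ n, ∀ b ∈ G i, b ⊆ X₂ ∧ #b = i)
    {t Λ : ℕ} {c d : ℕ → ℕ → ℕ}
    (hFc : ∀ i ≤ n, HasSupersetCounts X₁ (F i) t (c i))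
    (hGd : ∀ i ≤ n, HasSupersetCounts X₂ (G i) t (d i))
    (hsum : ∀ m ≤ t, ∑ i ∈ range (n + 1), c i m * d (n - i) (t - m) = Λ) :
    IsDesign (X₁ ∪ X₂) (sumFamily F G n) t n Λ := by
  refine ⟨fun b hb => subset_and_card_of_mem_sumFamily hX hF hG hb, fun T hT hTt => ?_⟩
  have hsplit := card_inter_add_card_inter_of_disjoint hX hT
  rw [card_filter_sumFamily hX hF hG hT, ← hsum #(T ∩ X₁) (by omega)]
  refine sum_congr rfl fun i hi => ?_
  have hi : i ≤ n := Nat.lt_succ_iff.1 (mem_range.1 hi)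
  rw [hFc i hi _ inter_subset_right (by omega),
    hGd (n - i) (by omega) _ inter_subset_right (by omega),
    show #(T ∩ X₂) = t - #(T ∩ X₁) by omega]

end DisjointUnion

/-- The number of blocks through a fixed `m`-set, `m ≤ t`, in the complete family of `k`-subsets
of a `v`-set when `k ≤ t`, and in a `t-(v, k, lam k)` design when `t < k`. -/
def supersetCount (v t : ℕ) (lam : ℕ → ℕ) (k m : ℕ) : ℕ :=
  if k ≤ t then if m ≤ k then (v - m).choose (k - m) else 0
  else lam k * (v - m).choose (t - m) / (k - m).choose (t - m)

theorem exists_supersetCount_families {t v n : ℕ} {lam : ℕ → ℕ}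
    (hdes : ∀ k, t < k → k ≤ n → SimpleDesignExists t v k (lam k)) {Y : Finset ℕ} (hY : #Y = v) :
    ∃ F : ℕ → Finset (Finset ℕ), ∀ k ≤ n,
      (∀ b ∈ F k, b ⊆ Y ∧ #b = k) ∧ HasSupersetCounts Y (F k) t (supersetCount v t lam k) := by
  subst hY
  have : ∀ k ≤ n, ∃ B : Finset (Finset ℕ),
      (∀ b ∈ B, b ⊆ Y ∧ #b = k) ∧ HasSupersetCounts Y B t (supersetCount #Y t lam k) := by
    intro k hk
    by_cases hkt : k ≤ t
    · refine ⟨Y.powersetCard k, fun b hb => mem_powersetCard.1 hb, ?_⟩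
      convert hasSupersetCounts_powersetCard Y t k using 1
      exact funext fun m => if_pos hkt
    · obtain ⟨B, hB⟩ := (hdes k (by omega) hk).exists_isDesign rfl
      refine ⟨B, hB.1, ?_⟩
      convert hB.hasSupersetCounts (by omega) using 1
      exact funext fun m => if_neg hkt
  choose! F hF using this
  exact ⟨F, hF⟩

theorem simpleDesignExists_two_mul {t v n Λ : ℕ} {lam : ℕ → ℕ}
    (hdes : ∀ k, t < k → k ≤ n → SimpleDesignExists t v k (lam k))
    (hsum : ∀ m ≤ t, ∑ i ∈ range (n + 1),
      supersetCount v t lam i m * supersetCount v t lam (n - i) (t - m) = Λ) :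
    SimpleDesignExists t (2 * v) n Λ := by
  have hX : Disjoint (Ico 0 v) (Ico v (2 * v)) := Ico_disjoint_Ico_consecutive 0 v (2 * v)
  obtain ⟨F, hF⟩ := exists_supersetCount_families hdes (Y := Ico 0 v) (by simp)
  obtain ⟨G, hG⟩ := exists_supersetCount_families hdes (Y := Ico v (2 * v)) (by simp; omega)
  refine ⟨_, _, ?_, isDesign_sumFamily hX (fun i hi => (hF i hi).1) (fun i hi => (hG i hi).1)
    (fun i hi => (hF i hi).2) (fun i hi => (hG i hi).2) hsum⟩
  rw [card_union_of_disjoint hX, Nat.card_Ico, Nat.card_Ico]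
  omega

def lam23 : ℕ → ℕ
  | 7 => 5 | 8 => 136 | 9 => 200 | 10 => 700 | 11 => 1820
  | 12 => 3640 | 13 => 5720 | 14 => 7150 | 15 => 7150 | _ => 0

theorem designExists_6_46_15
    (h1 : SimpleDesignExists 6 23 7 5)
    (h2 : SimpleDesignExists 6 23 8 136)
    (h3 : SimpleDesignExists 6 23 9 200)
    (h4 : SimpleDesignExists 6 23 10 700)
    (h5 : SimpleDesignExists 6 23 11 1820)
    (h6 : SimpleDesignExists 6 23 12 3640)
    (h7 : SimpleDesignExists 6 23 13 5720)
    (h8 : SimpleDesignExists 6 23 14 7150)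
    (h9 : SimpleDesignExists 6 23 15 7150)
    : SimpleDesignExists 6 46 15 80423200 := by
  refine simpleDesignExists_two_mul (t := 6) (v := 23) (lam := lam23) (fun k hk hk' => ?_) ?_
  · interval_cases k <;> assumption
  · intro m hm
    interval_cases m <;> decide
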